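/- Let a=(a_1,...,a_n) be a weakly increasing real sequence and let e=(e_1,...,e_n) be an arbitrary real sequence. If e is not a restricted growth sequence relative to a (in the cap sense for weakly increasing a), then some entry of the matrix M_{e→a} is negative. -/

import Mathlib

/-!
Write `N_k = ∏_{i<k} (X - a_i)`. Since `(X - e_m) N_k = N_{k+1} + (a_k - e_m) N_k`, the rows of
`M_{e→a}` obey the recursion `M_{m+1,k} = M_{m,k-1} + (a_k - e_m) M_{m,k}`. If all entries are
nonnegative, induction on `m` shows that row `m` vanishes strictly below the cap index `f(m)` and is
positive there; then `M_{m+1,f(m)} = (a_{f(m)} - e_m) M_{m,f(m)} ≥ 0` forces `e_m ≤ a_{f(m)}`.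
Monotonicity of `a` is what keeps the new leading entry positive when `e_m = a_{f(m)}` moves
the cap.
-/

open Polynomial Finset

/-- `IsCOB n a e M` says that `M` is the change-of-basis matrix `M_{e→a}`:
for each `0 ≤ m ≤ n`, the entry `M m k` is the coefficient of `∏_{i=1}^k (x - a_i)`
in the expansion of `∏_{i=1}^m (x - e_i)` in the basis
`1, (x-a₁), …, ∏_{i=1}^n (x-a_i)`.  (Sequences are 0-indexed: `a i` is `a_{i+1}`.)
Since that basis expansion is unique, this characterizes `M_{e→a}` uniquely. -/
def IsCOB (n : ℕ) (a e : ℕ → ℝ) (M : Matrix (Fin (n+1)) (Fin (n+1)) ℝ) : Prop :=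
  ∀ m : Fin (n+1),
    (∏ i ∈ Finset.range (m : ℕ), (X - C (e i))) =
      ∑ k : Fin (n+1), C (M m k) * ∏ i ∈ Finset.range (k : ℕ), (X - C (a i))

/-- The cap-index function for the restricted-growth condition (0-indexed version of
`f` with `f(1) = 1`): `capF a e i` is `f(i+1) - 1`, so the cap for `e i` is
`a (capF a e i)`.  The index increments exactly when `e_i` equals its cap. -/
noncomputable def capF (a e : ℕ → ℝ) : ℕ → ℕ
  | 0 => 0
  | i + 1 => if e i = a (capF a e i) then capF a e i + 1 else capF a e i

/-- `e` is a restricted growth sequence relative to (weakly increasing) `a`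
(cap sense): each `e_i` is at most its cap `a_{f(i)}`. -/
def IsRGCap (n : ℕ) (a e : ℕ → ℝ) : Prop :=
  ∀ i, i < n → e i ≤ a (capF a e i)

section Expansion

variable {R : Type*} [CommRing R]

/-- The coefficients of `∏_{i<m} (X - e_i)` in the basis `∏_{i<k} (X - a_i)`. -/
noncomputable def newtonCoeff (a e : ℕ → R) : ℕ → ℕ → R
  | 0, 0 => 1
  | 0, _ + 1 => 0
  | m + 1, 0 => (a 0 - e m) * newtonCoeff a e m 0
  | m + 1, k + 1 => newtonCoeff a e m k + (a (k + 1) - e m) * newtonCoeff a e m (k + 1)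

lemma newtonCoeff_succ_eq_zero_of_lt {a e : ℕ → R} {m c : ℕ}
    (hZ : ∀ k < c, newtonCoeff a e m k = 0) {k : ℕ} (hk : k < c) :
    newtonCoeff a e (m + 1) k = 0 := by
  cases k with
  | zero => simp [newtonCoeff, hZ 0 hk]
  | succ k => simp [newtonCoeff, hZ k (by omega), hZ (k + 1) hk]

lemma newtonCoeff_succ_of_forall_lt {a e : ℕ → R} {m c : ℕ}
    (hZ : ∀ k < c, newtonCoeff a e m k = 0) :
    newtonCoeff a e (m + 1) c = (a c - e m) * newtonCoeff a e m c := by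
  cases c with
  | zero => rfl
  | succ c => simp [newtonCoeff, hZ c (by omega)]

variable (a e : ℕ → R)

lemma newtonCoeff_eq_zero_of_lt {m k : ℕ} (h : m < k) : newtonCoeff a e m k = 0 := by
  induction m generalizing k with
  | zero => obtain ⟨k, rfl⟩ := Nat.exists_eq_add_of_lt h; rfl
  | succ m ih =>
    obtain ⟨k, rfl⟩ : ∃ j, k = j + 1 := ⟨k - 1, by omega⟩
    simp only [newtonCoeff, ih (show m < k by omega), ih (show m < k + 1 by omega), mul_zero,
      add_zero]

lemma prod_X_sub_C_mul_X_sub_C (c : R) (k : ℕ) :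
    (∏ i ∈ range k, (X - C (a i))) * (X - C c) =
      ∏ i ∈ range (k + 1), (X - C (a i)) + C (a k - c) * ∏ i ∈ range k, (X - C (a i)) := by
  rw [prod_range_succ, map_sub]
  ring

lemma prod_X_sub_C_eq_sum_newtonCoeff {m N : ℕ} (h : m ≤ N) :
    ∏ i ∈ range m, (X - C (e i)) =
      ∑ k ∈ range (N + 1), C (newtonCoeff a e m k) * ∏ i ∈ range k, (X - C (a i)) := by
  induction m with
  | zero => simp [sum_range_succ', newtonCoeff]
  | succ m ih =>
    have hlast : newtonCoeff a e m N = 0 := newtonCoeff_eq_zero_of_lt a e (by omega)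
    rw [prod_range_succ, ih (by omega), sum_mul]
    simp only [mul_assoc, prod_X_sub_C_mul_X_sub_C]
    simp only [mul_add, ← mul_assoc, ← map_mul, sum_add_distrib]
    rw [sum_range_succ _ N, hlast, sum_range_succ' _ N, sum_range_succ' _ N]
    simp only [newtonCoeff, map_add, add_mul, sum_add_distrib, map_zero, zero_mul, add_zero,
      mul_comm (newtonCoeff a e m _)]
    ring

noncomputable def newtonSequence [Nontrivial R] : Polynomial.Sequence R where
  elems' k := ∏ i ∈ range k, (X - C (a i))
  degree_eq' k := by
    rw [degree_eq_natDegree (monic_prod_of_monic _ _ fun i _ => monic_X_sub_C (a i)).ne_zero,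
      natDegree_finsetProd_X_sub_C_eq_card, card_range]

lemma eq_of_sum_C_mul_prod_X_sub_C_eq [IsDomain R] {N : ℕ} {c d : Fin N → R}
    (h : ∑ k, C (c k) * ∏ i ∈ range k, (X - C (a i)) =
      ∑ k, C (d k) * ∏ i ∈ range k, (X - C (a i))) : c = d := by
  have hind := (newtonSequence a).linearIndependent.comp (Fin.val : Fin N → ℕ) Fin.val_injective
  funext k
  refine sub_eq_zero.mp (Fintype.linearIndependent_iff.mp hind (c - d) ?_ k)
  simp only [Pi.sub_apply, sub_smul, sum_sub_distrib, smul_eq_C_mul]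
  exact sub_eq_zero.mpr h

end Expansion

lemma IsCOB.apply_eq_newtonCoeff {n : ℕ} {a e : ℕ → ℝ}
    {M : Matrix (Fin (n + 1)) (Fin (n + 1)) ℝ} (hM : IsCOB n a e M) (m k : Fin (n + 1)) :
    M m k = newtonCoeff a e m k := by
  have hrow := (hM m).symm.trans (prod_X_sub_C_eq_sum_newtonCoeff a e (N := n) (by omega))
  rw [← Fin.sum_univ_eq_sum_range (fun k => C (newtonCoeff a e m k) * _)] at hrow
  exact congrFun (eq_of_sum_C_mul_prod_X_sub_C_eq a hrow) k

section Sign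

variable {K : Type*} [CommRing K] [LinearOrder K] [IsStrictOrderedRing K] {a e : ℕ → K}

def IsFirstPos (w : ℕ → K) (c : ℕ) : Prop :=
  (∀ k < c, w k = 0) ∧ 0 < w c

lemma le_of_isFirstPos_of_newtonCoeff_succ_nonneg {m c : ℕ}
    (hc : IsFirstPos (newtonCoeff a e m) c) (hnn : 0 ≤ newtonCoeff a e (m + 1) c) :
    e m ≤ a c := by
  rw [newtonCoeff_succ_of_forall_lt hc.1] at hnn
  exact sub_nonneg.mp (nonneg_of_mul_nonneg_left hnn hc.2)

lemma isFirstPos_newtonCoeff_succ {m c : ℕ} (hc : IsFirstPos (newtonCoeff a e m) c)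
    (hle : e m ≤ a c) (hnn : ∀ k, 0 ≤ newtonCoeff a e m k)
    (ha : c + 1 ≤ m → a c ≤ a (c + 1)) :
    IsFirstPos (newtonCoeff a e (m + 1)) (if e m = a c then c + 1 else c) := by
  obtain ⟨hZ, hP⟩ := hc
  split_ifs with heq
  · refine ⟨fun k hk => ?_, ?_⟩
    · rcases Nat.lt_succ_iff_lt_or_eq.mp hk with hk | rfl
      · exact newtonCoeff_succ_eq_zero_of_lt hZ hk
      · rw [newtonCoeff_succ_of_forall_lt hZ, heq, sub_self, zero_mul]
    · have hnext : 0 ≤ (a (c + 1) - e m) * newtonCoeff a e m (c + 1) := by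
        rcases le_or_gt (c + 1) m with hcm | hcm
        · exact mul_nonneg (by linarith [ha hcm]) (hnn _)
        · rw [newtonCoeff_eq_zero_of_lt a e hcm, mul_zero]
      show 0 < newtonCoeff a e m c + (a (c + 1) - e m) * newtonCoeff a e m (c + 1)
      linarith
  · refine ⟨fun k hk => newtonCoeff_succ_eq_zero_of_lt hZ hk, ?_⟩
    rw [newtonCoeff_succ_of_forall_lt hZ]
    exact mul_pos (sub_pos.mpr (lt_of_le_of_ne hle heq)) hP

end Sign

theorem isRGCap_of_newtonCoeff_nonneg {n : ℕ} {a e : ℕ → ℝ}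
    (ha : ∀ i j, i ≤ j → j < n → a i ≤ a j)
    (hW : ∀ m ≤ n, ∀ k, 0 ≤ newtonCoeff a e m k) :
    IsRGCap n a e := by
  have key : ∀ m ≤ n, (∀ i < m, e i ≤ a (capF a e i)) ∧
      IsFirstPos (newtonCoeff a e m) (capF a e m) := by
    intro m
    induction m with
    | zero => exact fun _ => ⟨by simp, by simp [IsFirstPos, capF, newtonCoeff]⟩
    | succ m ih =>
      intro hm
      obtain ⟨hrg, hc⟩ := ih (by omega)
      have hle := le_of_isFirstPos_of_newtonCoeff_succ_nonneg hc (hW (m + 1) hm _)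
      refine ⟨fun i hi => ?_, ?_⟩
      · rcases Nat.lt_succ_iff_lt_or_eq.mp hi with hi | rfl
        exacts [hrg i hi, hle]
      · exact isFirstPos_newtonCoeff_succ hc hle (hW m (by omega))
          fun hcm => ha _ _ (by omega) (by omega)
  exact fun i hi => (key (i + 1) hi).1 i (lt_add_one i)

theorem statement2 (n : ℕ) (a e : ℕ → ℝ)
    (ha : ∀ i j, i ≤ j → j < n → a i ≤ a j)
    (M : Matrix (Fin (n+1)) (Fin (n+1)) ℝ) (hM : IsCOB n a e M)
    (h : ¬ IsRGCap n a e) :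
    ∃ m k : Fin (n+1), M m k < 0 := by
  by_contra! hM_nonneg
  refine h (isRGCap_of_newtonCoeff_nonneg ha fun m hm k => ?_)
  rcases le_or_gt k n with hk | hk
  · simpa [hM.apply_eq_newtonCoeff] using hM_nonneg ⟨m, by omega⟩ ⟨k, by omega⟩
  · rw [newtonCoeff_eq_zero_of_lt a e (by omega)]
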